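/- arXiv:2209.05102 — 5 statements merged into one kernel-verified Lean document; each statement's English description precedes it below -/
import Mathlib

section
/- For every vertex cover C of the infinite hexagonal grid T₃ and all integers m, n ≥ 1, the set C ∩ ({0,…,m−1} × {0,…,2n−1}) has at least m·n elements. -/
/-- A vertex cover of a simple graph: every edge has at least one endpoint in `C`. -/
def IsVertexCover {V : Type*} (G : SimpleGraph V) (C : Set V) : Prop :=
  ∀ ⦃u v : V⦄, G.Adj u v → u ∈ C ∨ v ∈ C

/-- The box `{0,…,w−1} × {0,…,h−1}` (w columns, h rows). -/
def box (w h : ℕ) : Set (ℤ × ℤ) :=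
  Set.Ico (0 : ℤ) (w : ℤ) ×ˢ Set.Ico (0 : ℤ) (h : ℤ)

/-- Subgraph of `G` induced on a set `s` of vertices (kept on the same vertex type). -/
def finGrid (G : SimpleGraph (ℤ × ℤ)) (w h : ℕ) : SimpleGraph (ℤ × ℤ) where
  Adj p q := G.Adj p q ∧ p ∈ box w h ∧ q ∈ box w h
  symm := ⟨fun p q hpq => ⟨hpq.1.symm, hpq.2.2, hpq.2.1⟩⟩
  loopless := ⟨fun p hp => G.loopless.irrefl p hp.1⟩

/-- The infinite hexagonal grid. -/
def T3 : SimpleGraph (ℤ × ℤ) :=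
  SimpleGraph.fromRel (fun p q =>
    q = (p.1, p.2 + 1) ∨
    ((4 : ℤ) ∣ p.2 ∧ q = (p.1 + 1, p.2 + 1)) ∨
    ((4 : ℤ) ∣ (p.2 - 2) ∧ q = (p.1 - 1, p.2 + 1)))

/-! The vertical edges `(x, 2y) — (x, 2y + 1)` form a perfect matching of the box
`{0,…,m−1} × {0,…,2n−1}`, and a vertex cover must contain a distinct endpoint of each of its
`m·n` edges. -/

theorem IsVertexCover.ncard_le_ncard_inter {V ι : Type*} {G : SimpleGraph V} {C : Set V}
    (hC : IsVertexCover G C) {s : Set ι} {t : Set V} (ht : t.Finite) (u v : ι → V)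
    (hadj : ∀ i ∈ s, G.Adj (u i) (v i)) (hsub : ∀ i ∈ s, u i ∈ t ∧ v i ∈ t)
    (hdisj : s.PairwiseDisjoint fun i => ({u i, v i} : Set V)) :
    s.ncard ≤ (C ∩ t).ncard := by
  classical
  let pick : ι → V := fun i => if u i ∈ C then u i else v i
  have pick_mem_edge : ∀ i, pick i ∈ ({u i, v i} : Set V) := fun i => by
    by_cases h : u i ∈ C <;> simp [pick, h]
  refine Set.ncard_le_ncard_of_injOn pick (fun i hi => ⟨?_, ?_⟩) ?_ (ht.inter_of_right C)
  · by_cases h : u i ∈ C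
    · simp [pick, h]
    · simpa [pick, h] using (hC (hadj i hi)).resolve_left h
  · by_cases h : u i ∈ C <;> simp [pick, h, hsub i hi]
  · intro i hi j hj hij
    exact hdisj.elim_set hi hj (pick i) (pick_mem_edge i) (hij ▸ pick_mem_edge j)

lemma T3_adj_vertical (x y : ℤ) : T3.Adj (x, y) (x, y + 1) := by
  rw [T3, SimpleGraph.fromRel_adj]
  exact ⟨by simp [Prod.ext_iff], Or.inl (Or.inl rfl)⟩

lemma box_finite (w h : ℕ) : (box w h).Finite :=
  (Set.finite_Ico _ _).prod (Set.finite_Ico _ _)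

lemma ncard_box (w h : ℕ) : (box w h).ncard = w * h := by
  rw [box, Set.ncard_prod, Set.ncard_eq_toFinset_card', Set.ncard_eq_toFinset_card']
  simp

theorem stmt_2_general (C : Set (ℤ × ℤ)) (hcov : IsVertexCover T3 C)
    (m n : ℕ) :
    m * n ≤ (C ∩ box m (2 * n)).ncard := by
  rw [← ncard_box m n]
  refine hcov.ncard_le_ncard_inter (box_finite m (2 * n)) (fun p => (p.1, 2 * p.2))
    (fun p => (p.1, 2 * p.2 + 1)) (fun p _ => T3_adj_vertical _ _) ?_ ?_
  · rintro ⟨x, y⟩ ⟨hx, hy⟩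
    simp only [box, Set.mem_prod, Set.mem_Ico] at hx hy ⊢
    omega
  · rintro ⟨x, y⟩ - ⟨x', y'⟩ - hne
    refine Set.disjoint_left.mpr ?_
    rintro ⟨a, b⟩ h h'
    simp only [Set.mem_insert_iff, Set.mem_singleton_iff, Prod.ext_iff] at h h'
    exact hne (Prod.ext (by omega) (by omega))

/-- Any vertex cover of the infinite hexagonal grid meets `{0,…,m−1} × {0,…,2n−1}` in at least
`m·n` vertices. -/
theorem stmt_2 (C : Set (ℤ × ℤ)) (hcov : IsVertexCover T3 C)
    (m n : ℕ) (hm : 1 ≤ m) (hn : 1 ≤ n) :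
    m * n ≤ (C ∩ box m (2 * n)).ncard :=
  stmt_2_general C hcov m n
end

section
/- For every vertex cover C of the infinite triangular grid T₆ and every integer n ≥ 2, 3·|C ∩ ({0,…,n−1} × {0,…,n−1})| ≥ 2n² − n. -/
/-- The infinite triangular grid. -/
def T6 : SimpleGraph (ℤ × ℤ) :=
  SimpleGraph.fromRel (fun p q =>
    (q.1 - p.1, q.2 - p.2) ∈
      ({(1, 0), (-1, 0), (0, 1), (0, -1), (1, 1), (-1, -1)} : Set (ℤ × ℤ)))

/-!
Each triangle of `T6` contains at least two vertices of a cover and each edge at least one.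
A `3 × 2` or `2 × 3` rectangle is the disjoint union of two triangles, so a strip of height `2`
and width `w` contains at least `(4w - 2)/3` cover vertices (tile it by `3 × 2` blocks, with one or
two vertical edges left over), and a strip of height `3` at least `2w - 1` (tile it by `2 × 3`
blocks, with possibly one vertical edge left over). Stacking strips of height `2` on at most one
strip of height `3` gives `3 |C ∩ R| ≥ 2wh - h` for every `w × h` rectangle `R` with `h ≥ 2`.
-/

open Set

lemma Set.ncard_inter_union_of_disjoint {α : Type*} (C : Set α) {A B : Set α}
    (hAB : Disjoint A B) (hA : A.Finite) (hB : B.Finite) :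
    (C ∩ (A ∪ B)).ncard = (C ∩ A).ncard + (C ∩ B).ncard := by
  rw [inter_union_distrib_left]
  exact ncard_union_eq (hAB.mono inter_subset_right inter_subset_right)
    (hA.inter_of_right C) (hB.inter_of_right C)

lemma Set.ncard_inter_add_ncard_inter_le {α : Type*} (C : Set α) {A B S : Set α}
    (hAB : Disjoint A B) (hS : A ∪ B ⊆ S) (hSfin : S.Finite) :
    (C ∩ A).ncard + (C ∩ B).ncard ≤ (C ∩ S).ncard := by
  rw [← ncard_inter_union_of_disjoint C hAB (hSfin.subset (subset_union_left.trans hS))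
    (hSfin.subset (subset_union_right.trans hS))]
  exact ncard_le_ncard (inter_subset_inter_right C hS) (hSfin.inter_of_right C)

namespace IsVertexCover

variable {V : Type*} {G : SimpleGraph V} {C S : Set V}

lemma one_le_ncard_inter (hC : IsVertexCover G C) (hS : S.Finite) {u v : V}
    (huv : G.Adj u v) (hu : u ∈ S) (hv : v ∈ S) : 1 ≤ (C ∩ S).ncard := by
  refine (ncard_pos (hS.inter_of_right C)).2 ?_
  rcases hC huv with h | h
  exacts [⟨u, h, hu⟩, ⟨v, h, hv⟩]

lemma two_le_ncard_inter_triple (hC : IsVertexCover G C) {a b c : V} (hab : G.Adj a b)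
    (hbc : G.Adj b c) (hac : G.Adj a c) : 2 ≤ (C ∩ {a, b, c}).ncard := by
  refine (one_lt_ncard_iff (toFinite _)).2 ?_
  by_cases haC : a ∈ C
  · rcases hC hbc with h | h
    exacts [⟨a, b, ⟨haC, by simp⟩, ⟨h, by simp⟩, hab.ne⟩,
      ⟨a, c, ⟨haC, by simp⟩, ⟨h, by simp⟩, hac.ne⟩]
  · exact ⟨b, c, ⟨(hC hab).resolve_left haC, by simp⟩, ⟨(hC hac).resolve_left haC, by simp⟩,
      hbc.ne⟩

end IsVertexCover

namespace T6

lemma adj_right (x y : ℤ) : T6.Adj (x, y) (x + 1, y) := by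
  simp [T6, SimpleGraph.fromRel_adj, Prod.ext_iff]

lemma adj_up (x y : ℤ) : T6.Adj (x, y) (x, y + 1) := by
  simp [T6, SimpleGraph.fromRel_adj, Prod.ext_iff]

lemma adj_diag (x y : ℤ) : T6.Adj (x, y) (x + 1, y + 1) := by
  simp [T6, SimpleGraph.fromRel_adj, Prod.ext_iff]

end T6

def lowerTriangle (x y : ℤ) : Set (ℤ × ℤ) := {(x, y), (x + 1, y), (x + 1, y + 1)}

def upperTriangle (x y : ℤ) : Set (ℤ × ℤ) := {(x, y), (x, y + 1), (x + 1, y + 1)}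

def rect (x y : ℤ) (w h : ℕ) : Set (ℤ × ℤ) :=
  Ico x (x + w) ×ˢ Ico y (y + h)

section Rect

variable (C : Set (ℤ × ℤ)) (x y : ℤ) (w w' h h' : ℕ)

lemma rect_finite : (rect x y w h).Finite :=
  (finite_Ico _ _).prod (finite_Ico _ _)

lemma box_eq_rect : box w h = rect 0 0 w h := by
  simp [box, rect]

lemma ncard_inter_rect_add_width :
    (C ∩ rect x y (w + w') h).ncard
      = (C ∩ rect x y w h).ncard + (C ∩ rect (x + w) y w' h).ncard := by
  rw [← ncard_inter_union_of_disjoint C _ (rect_finite ..) (rect_finite ..)]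
  · congr 2
    ext ⟨a, b⟩
    simp only [rect, mem_union, mem_prod, mem_Ico, Nat.cast_add]
    omega
  · rw [disjoint_left]
    rintro ⟨a, b⟩ h1 h2
    simp only [rect, mem_prod, mem_Ico] at h1 h2
    omega

lemma ncard_inter_rect_add_height :
    (C ∩ rect x y w (h + h')).ncard
      = (C ∩ rect x y w h).ncard + (C ∩ rect x (y + h) w h').ncard := by
  rw [← ncard_inter_union_of_disjoint C _ (rect_finite ..) (rect_finite ..)]
  · congr 2
    ext ⟨a, b⟩
    simp only [rect, mem_union, mem_prod, mem_Ico, Nat.cast_add]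
    omega
  · rw [disjoint_left]
    rintro ⟨a, b⟩ h1 h2
    simp only [rect, mem_prod, mem_Ico] at h1 h2
    omega

end Rect

namespace IsVertexCover

variable {C : Set (ℤ × ℤ)} (x y : ℤ)

lemma one_le_ncard_inter_rect_one_two (hC : IsVertexCover T6 C) :
    1 ≤ (C ∩ rect x y 1 2).ncard :=
  hC.one_le_ncard_inter (rect_finite ..) (T6.adj_up x y)
    (by simp [rect]) (by simp [rect])

lemma two_le_ncard_inter_lowerTriangle (hC : IsVertexCover T6 C) :
    2 ≤ (C ∩ lowerTriangle x y).ncard :=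
  hC.two_le_ncard_inter_triple (T6.adj_right x y) (T6.adj_up (x + 1) y) (T6.adj_diag x y)

lemma two_le_ncard_inter_upperTriangle (hC : IsVertexCover T6 C) :
    2 ≤ (C ∩ upperTriangle x y).ncard :=
  hC.two_le_ncard_inter_triple (T6.adj_up x y) (T6.adj_right x (y + 1)) (T6.adj_diag x y)

lemma four_le_ncard_inter_rect_three_two (hC : IsVertexCover T6 C) :
    4 ≤ (C ∩ rect x y 3 2).ncard := by
  refine (add_le_add (hC.two_le_ncard_inter_upperTriangle x y)
    (hC.two_le_ncard_inter_lowerTriangle (x + 1) y)).trans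
    (ncard_inter_add_ncard_inter_le C ?_ ?_ (rect_finite ..))
  · simp only [upperTriangle, lowerTriangle, disjoint_insert_left, disjoint_singleton_left,
      mem_insert_iff, mem_singleton_iff, Prod.ext_iff]
    omega
  · rintro ⟨a, b⟩ hp
    simp only [upperTriangle, lowerTriangle, mem_union, mem_insert_iff, mem_singleton_iff,
      Prod.ext_iff] at hp
    simp only [rect, mem_prod, mem_Ico]
    omega

lemma four_le_ncard_inter_rect_two_three (hC : IsVertexCover T6 C) :
    4 ≤ (C ∩ rect x y 2 3).ncard := by
  refine (add_le_add (hC.two_le_ncard_inter_lowerTriangle x y)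
    (hC.two_le_ncard_inter_upperTriangle x (y + 1))).trans
    (ncard_inter_add_ncard_inter_le C ?_ ?_ (rect_finite ..))
  · simp only [upperTriangle, lowerTriangle, disjoint_insert_left, disjoint_singleton_left,
      mem_insert_iff, mem_singleton_iff, Prod.ext_iff]
    omega
  · rintro ⟨a, b⟩ hp
    simp only [upperTriangle, lowerTriangle, mem_union, mem_insert_iff, mem_singleton_iff,
      Prod.ext_iff] at hp
    simp only [rect, mem_prod, mem_Ico]
    omega

lemma four_mul_le_ncard_inter_rect_height_two (hC : IsVertexCover T6 C) :
    ∀ w : ℕ, 4 * w ≤ 3 * (C ∩ rect x y w 2).ncard + 2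
  | 0 => by simp
  | 1 => by have := hC.one_le_ncard_inter_rect_one_two x y; omega
  | 2 => by
    have h₁ := hC.one_le_ncard_inter_rect_one_two x y
    have h₂ := hC.one_le_ncard_inter_rect_one_two (x + 1) y
    rw [ncard_inter_rect_add_width C x y 1 1 2, Nat.cast_one]
    omega
  | w + 3 => by
    have ih := four_mul_le_ncard_inter_rect_height_two hC w
    have hblock := hC.four_le_ncard_inter_rect_three_two (x + w) y
    rw [ncard_inter_rect_add_width]
    omega

lemma six_mul_le_ncard_inter_rect_height_three (hC : IsVertexCover T6 C) :
    ∀ w : ℕ, 6 * w ≤ 3 * (C ∩ rect x y w 3).ncard + 3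
  | 0 => by simp
  | 1 => by
    have := hC.one_le_ncard_inter_rect_one_two x y
    rw [ncard_inter_rect_add_height C x y 1 2 1]
    omega
  | w + 2 => by
    have ih := six_mul_le_ncard_inter_rect_height_three hC w
    have hblock := hC.four_le_ncard_inter_rect_two_three (x + w) y
    rw [ncard_inter_rect_add_width]
    omega

lemma two_mul_mul_le_ncard_inter_rect (hC : IsVertexCover T6 C) (w : ℕ) :
    ∀ h : ℕ, 2 ≤ h → 2 * h * w ≤ 3 * (C ∩ rect x y w h).ncard + h
  | 2, _ => by have := hC.four_mul_le_ncard_inter_rect_height_two x y w; omega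
  | 3, _ => by have := hC.six_mul_le_ncard_inter_rect_height_three x y w; omega
  | h + 4, _ => by
    have ih := two_mul_mul_le_ncard_inter_rect hC w (h + 2) (by omega)
    have hstrip := hC.four_mul_le_ncard_inter_rect_height_two x (y + (h + 2 : ℕ)) w
    rw [ncard_inter_rect_add_height C x y w (h + 2) 2]
    linarith

end IsVertexCover

/-- Any vertex cover of the infinite triangular grid meets `{0,…,n−1}²` in at least
`(2n² − n)/3` vertices. -/
theorem stmt_4 (C : Set (ℤ × ℤ)) (hcov : IsVertexCover T6 C)
    (n : ℕ) (hn : 2 ≤ n) :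
    2 * n ^ 2 - n ≤ 3 * (C ∩ box n n).ncard := by
  have h := hcov.two_mul_mul_le_ncard_inter_rect 0 0 n n hn
  rw [← box_eq_rect] at h
  rw [sq, Nat.sub_le_iff_le_add]
  linarith
end

section
/- Let D = {(x,y) ∈ ℤ × ℤ : (x ≡ 0 and y ≡ 1 mod 3) or (x ≡ 1 and y ≡ 0 mod 3) or (x ≡ 2 and y ≡ 2 mod 3)} and C = (ℤ × ℤ) \ D. Then the family {C + t : t ∈ ℤ × ℤ} of all translates of C is a defense-closed family of vertex covers of the infinite triangular grid T₆, and for every n ≥ 1 each translate of C meets {0,…,3n−1} × {0,…,3n−1} in exactly 6n² vertices. -/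
/-- A defense-closed family of vertex covers of `G`: every member is a vertex cover, and for
every member `S` and edge `{u,v}` with `u ∈ S`, `v ∉ S`, some member `S'` is obtained from `S`
by a bijection moving the guard on `u` to `v` and every other guard by at most one edge. -/
def IsDefenseClosedFamily {V : Type*} (G : SimpleGraph V) (F : Set (Set V)) : Prop :=
  (∀ S ∈ F, IsVertexCover G S) ∧
  ∀ S ∈ F, ∀ u v : V, G.Adj u v → u ∈ S → v ∉ S →
    ∃ S' ∈ F, ∃ f : V → V, Set.BijOn f S S' ∧ f u = v ∧
      ∀ s ∈ S, f s = s ∨ G.Adj s (f s)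

/-- The excluded set `D` of the optimal cover of the triangular grid. -/
def D : Set (ℤ × ℤ) :=
  {p | ((3 : ℤ) ∣ p.1 ∧ (3 : ℤ) ∣ (p.2 - 1)) ∨
       ((3 : ℤ) ∣ (p.1 - 1) ∧ (3 : ℤ) ∣ p.2) ∨
       ((3 : ℤ) ∣ (p.1 - 2) ∧ (3 : ℤ) ∣ (p.2 - 2))}

/-
`D` is the residue class `x + y ≡ 1 (mod 3)`, and every edge of `T6` changes `x + y` by `±1`
or `±2`, so `D` is independent and `C = Dᶜ` is a vertex cover. `T6` is invariant under
translations, so when the guard on `u` moves to `v`, shifting every guard by `v - u` moves each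
along an edge parallel to `uv` and turns `C + t` into `C + (t + (v - u))`. In the `3n × 3n` box
each column meets each residue class of `x + y` in `n` points, hence `C + t` in `2n` of them.
-/

section Translates

variable {V : Type*} [AddCommGroup V] {G : SimpleGraph V} {C : Set V}

theorem IsVertexCover.image_add_right (hG : ∀ u v w : V, G.Adj u v → G.Adj (u + w) (v + w))
    (hC : IsVertexCover G C) (t : V) : IsVertexCover G ((· + t) '' C) := by
  intro u v huv
  simpa only [Set.image_add_right, Set.mem_preimage, ← sub_eq_add_neg] using
    hC (by simpa only [sub_eq_add_neg] using hG u v (-t) huv)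

theorem isDefenseClosedFamily_translates (hG : ∀ u v w : V, G.Adj u v → G.Adj (u + w) (v + w))
    (hC : IsVertexCover G C) :
    IsDefenseClosedFamily G {S | ∃ t : V, S = (fun p => p + t) '' C} := by
  refine ⟨fun S ⟨t, hS⟩ => hS ▸ hC.image_add_right hG t, ?_⟩
  rintro S ⟨t, rfl⟩ u v huv - -
  refine ⟨(· + (t + (v - u))) '' C, ⟨t + (v - u), rfl⟩, (· + (v - u)), ?_, ?_, ?_⟩
  · have hcomp : (· + (v - u)) '' ((· + t) '' C) = (· + (t + (v - u))) '' C := by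
      simp only [Set.image_image, add_assoc]
    exact hcomp ▸ (add_left_injective (v - u)).injOn.bijOn_image
  · exact add_sub_cancel u v
  · intro s _
    right
    simpa [add_comm, add_sub_assoc'] using hG u v (s - u) huv

end Translates

theorem T6_adj_add_right {u v : ℤ × ℤ} (w : ℤ × ℤ) (h : T6.Adj u v) : T6.Adj (u + w) (v + w) := by
  simpa [T6, SimpleGraph.fromRel_adj] using h

theorem mem_D_iff {p : ℤ × ℤ} : p ∈ D ↔ (p.1 + p.2) % 3 = 1 := by
  simp only [D, Set.mem_ofPred_eq]
  omega

theorem isVertexCover_T6_compl_D : IsVertexCover T6 Dᶜ := by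
  intro u v huv
  simp only [T6, SimpleGraph.fromRel_adj, Set.mem_insert_iff, Set.mem_singleton_iff,
    Prod.mk.injEq] at huv
  simp only [Set.mem_compl_iff, mem_D_iff]
  omega

-- Written as a congruence condition on `q.2` for fixed `q.1`, i.e. column by column.
theorem mem_image_add_right_compl_D {t q : ℤ × ℤ} :
    q ∈ (· + t) '' Dᶜ ↔ ¬ 3 ∣ q.2 - (1 + t.1 + t.2 - q.1) := by
  simp only [Set.image_add_right, Set.mem_preimage, Set.mem_compl_iff, mem_D_iff, Prod.fst_add,
    Prod.snd_add, Prod.fst_neg, Prod.snd_neg]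
  omega

section Counting

open Finset

theorem card_filter_Ico_dvd_sub (n : ℕ) (v : ℤ) : #{y ∈ Ico (0 : ℤ) (3 * n) | 3 ∣ y - v} = n := by
  have : {y ∈ Ico (0 : ℤ) (3 * n) | 3 ∣ y - v} = (Ico (0 : ℤ) n).image (3 * · + v % 3) := by
    ext y
    simp only [mem_filter, mem_Ico, mem_image]
    exact ⟨fun h => ⟨(y - v % 3) / 3, by omega, by omega⟩, by rintro ⟨i, hi, rfl⟩; omega⟩
  rw [this, card_image_of_injective _ (fun a b hab => by omega)]
  simp

theorem card_filter_Ico_not_dvd_sub (n : ℕ) (v : ℤ) :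
    #{y ∈ Ico (0 : ℤ) (3 * n) | ¬ 3 ∣ y - v} = 2 * n := by
  have := card_filter_add_card_filter_not (s := Ico (0 : ℤ) (3 * n)) (3 ∣ · - v)
  rw [card_filter_Ico_dvd_sub, Int.card_Ico] at this
  omega

theorem ncard_image_add_right_compl_D_inter_box (n : ℕ) (t : ℤ × ℤ) :
    ((· + t) '' Dᶜ ∩ box (3 * n) (3 * n)).ncard = 6 * n ^ 2 := by
  have : (· + t) '' Dᶜ ∩ box (3 * n) (3 * n) =
      ↑{q ∈ Ico (0 : ℤ) (3 * n) ×ˢ Ico (0 : ℤ) (3 * n) | ¬ 3 ∣ q.2 - (1 + t.1 + t.2 - q.1)} := by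
    ext q
    simp only [Set.mem_inter_iff, mem_image_add_right_compl_D, _root_.box, coe_filter,
      mem_product, mem_Ico, Set.mem_prod, Set.mem_Ico, Set.mem_ofPred_eq]
    push_cast
    tauto
  rw [this, Set.ncard_coe_finset, card_filter, sum_product]
  simp only [← card_filter, card_filter_Ico_not_dvd_sub, sum_const, Int.card_Ico, sub_zero,
    smul_eq_mul]
  rw [show ((3 : ℤ) * n).toNat = 3 * n by omega]
  ring

end Counting

/-- The translates of `C = (ℤ×ℤ) \ D` form a defense-closed family of vertex covers of the
infinite triangular grid, each translate meeting `{0,…,3n−1}²` in exactly `6n²` vertices. -/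
theorem stmt_8 :
    IsDefenseClosedFamily T6 {S | ∃ t : ℤ × ℤ, S = (fun p => p + t) '' Dᶜ} ∧
    ∀ n : ℕ, 1 ≤ n → ∀ t : ℤ × ℤ,
      (((fun p => p + t) '' Dᶜ) ∩ box (3 * n) (3 * n)).ncard = 6 * n ^ 2 :=
  ⟨isDefenseClosedFamily_translates (fun _ _ w => T6_adj_add_right w) isVertexCover_T6_compl_D,
    fun n _ t => ncard_image_add_right_compl_D_inter_box n t⟩
end

section
/- For every integer w ≥ 2, every vertex cover C of the two-row finite octagonal grid T₈(2,w) satisfies 2·|C| ≥ 3w − 1. -/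
/-- The infinite octagonal grid (king graph on ℤ²). -/
def T8 : SimpleGraph (ℤ × ℤ) :=
  SimpleGraph.fromRel (fun p q => |p.1 - q.1| ≤ 1 ∧ |p.2 - q.2| ≤ 1)

/-! Two adjacent columns of `T₈(2,w)` span a 4-clique and a single column a 2-clique, and a
vertex cover misses at most one vertex of any clique. Splitting the grid into ⌊w/2⌋ column pairs
and, for odd `w`, one last column gives `|C| ≥ 3⌊w/2⌋ + (w mod 2)`, i.e. `2|C| ≥ 3w − 1`. -/

theorem IsVertexCover.ncard_le_ncard_inter_add_one {V : Type*} {G : SimpleGraph V} {C s : Set V}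
    (hC : IsVertexCover G C) (hs : G.IsClique s) (hfin : s.Finite) :
    s.ncard ≤ (s ∩ C).ncard + 1 := by
  have hout : (s \ C).ncard ≤ 1 := by
    refine (Set.ncard_le_one hfin.sdiff).2 fun u hu v hv => ?_
    by_contra huv
    exact (hC (hs hu.1 hv.1 huv)).elim hu.2 hv.2
  rw [← Set.ncard_inter_add_ncard_sdiff_eq_ncard s C hfin]
  omega

theorem Int.ncard_Ico (a b : ℤ) : (Set.Ico a b).ncard = (b - a).toNat := by
  rw [← Finset.coe_Ico, Set.ncard_coe_finset, Int.card_Ico]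

def strip (a k h : ℕ) : Set (ℤ × ℤ) :=
  Set.Ico (a : ℤ) (a + k : ℕ) ×ˢ Set.Ico 0 (h : ℤ)

theorem box_eq_strip (w h : ℕ) : box w h = strip 0 w h := by
  simp [box, strip]

theorem strip_finite (a k h : ℕ) : (strip a k h).Finite :=
  (Set.finite_Ico _ _).prod (Set.finite_Ico _ _)

theorem ncard_strip (a k h : ℕ) : (strip a k h).ncard = k * h := by
  simp [strip, Set.ncard_prod, Int.ncard_Ico]

theorem strip_add (a k l h : ℕ) : strip a (k + l) h = strip a k h ∪ strip (a + k) l h := by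
  rw [strip, strip, strip, ← Set.union_prod, ← add_assoc,
    Set.Ico_union_Ico_eq_Ico (by simp) (by simp)]

theorem disjoint_strip_strip_add (a k l h : ℕ) : Disjoint (strip a k h) (strip (a + k) l h) :=
  Set.disjoint_prod.2 (Or.inl Set.Ico_disjoint_Ico_same)

theorem ncard_strip_add_inter (a k l h : ℕ) (C : Set (ℤ × ℤ)) :
    (strip a (k + l) h ∩ C).ncard =
      (strip a k h ∩ C).ncard + (strip (a + k) l h ∩ C).ncard := by
  rw [strip_add, Set.union_inter_distrib_right,
    Set.ncard_union_eq ((disjoint_strip_strip_add a k l h).mono Set.inter_subset_left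
      Set.inter_subset_left) ((strip_finite a k h).inter_of_left C)
      ((strip_finite (a + k) l h).inter_of_left C)]

theorem isClique_finGrid_T8_strip {W a k h : ℕ} (hk : k ≤ 2) (hh : h ≤ 2) (hW : a + k ≤ W) :
    (finGrid T8 W h).IsClique (strip a k h) := by
  rintro p ⟨⟨hp1, hp1'⟩, hp2, hp2'⟩ q ⟨⟨hq1, hq1'⟩, hq2, hq2'⟩ hpq
  have hW' : (a : ℤ) + k ≤ W := by exact_mod_cast hW
  refine ⟨⟨hpq, Or.inl ⟨abs_le.2 ⟨?_, ?_⟩, abs_le.2 ⟨?_, ?_⟩⟩⟩,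
    ⟨⟨?_, ?_⟩, ?_, ?_⟩, ⟨?_, ?_⟩, ?_, ?_⟩ <;> omega

theorem IsVertexCover.three_mul_sub_one_le_ncard_strip_inter {W : ℕ} {C : Set (ℤ × ℤ)}
    (hC : IsVertexCover (finGrid T8 W 2) C) :
    ∀ w ≤ W, 3 * w - 1 ≤ 2 * (strip 0 w 2 ∩ C).ncard
  | 0, _ => by simp
  | 1, hW => by
    have hcolumn := hC.ncard_le_ncard_inter_add_one
      (isClique_finGrid_T8_strip (by norm_num) le_rfl hW) (strip_finite 0 1 2)
    rw [ncard_strip] at hcolumn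
    omega
  | w + 2, hW => by
    have hblock := hC.ncard_le_ncard_inter_add_one
      (isClique_finGrid_T8_strip (a := w) le_rfl le_rfl hW) (strip_finite w 2 2)
    have ih := hC.three_mul_sub_one_le_ncard_strip_inter w (by omega)
    rw [ncard_strip] at hblock
    rw [ncard_strip_add_inter, zero_add]
    omega

theorem stmt_13_general (w : ℕ)
    (C : Set (ℤ × ℤ)) (hsub : C ⊆ box w 2)
    (hcov : IsVertexCover (finGrid T8 w 2) C) :
    3 * w - 1 ≤ 2 * C.ncard := by
  have := hcov.three_mul_sub_one_le_ncard_strip_inter w le_rfl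
  rwa [← box_eq_strip, Set.inter_eq_right.2 hsub] at this

/-- Every vertex cover of the two-row octagonal grid `T₈(2,w)` satisfies `2|C| ≥ 3w − 1`. -/
theorem stmt_13 (w : ℕ) (hw : 2 ≤ w)
    (C : Set (ℤ × ℤ)) (hsub : C ⊆ box w 2)
    (hcov : IsVertexCover (finGrid T8 w 2) C) :
    3 * w - 1 ≤ 2 * C.ncard :=
  stmt_13_general w C hsub hcov
end

section
/- For every even integer h ≥ 2 and every integer w ≥ 2, every vertex cover C of the finite octagonal grid T₈(h,w) satisfies 4·|C| ≥ 3·h·w − h. -/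
/-!
Cut the box into the `⌈w/2⌉ · ⌈h/2⌉` blocks `{2a, 2a+1} × {2b, 2b+1}` (clipped to the box).
Each block is a clique of the king graph, and a vertex cover misses at most one vertex of any
clique, so `|C| ≥ hw − ⌈w/2⌉⌈h/2⌉`. For even `h` this is
`hw − (h/2)⌈w/2⌉ ≥ (3hw − h)/4`, since `2⌈w/2⌉ ≤ w + 1`.
-/

lemma IsVertexCover.card_le_card_filter_add_card_image {V ι : Type*} [DecidableEq ι]
    {G : SimpleGraph V} {C : Set V} [DecidablePred (· ∈ C)] (hC : IsVertexCover G C)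
    (s : Finset V) (f : V → ι) (hf : ∀ x ∈ s, ∀ y ∈ s, x ≠ y → f x = f y → G.Adj x y) :
    s.card ≤ (s.filter (· ∈ C)).card + (s.image f).card := by
  have hinj : Set.InjOn f ↑(s.filter (· ∉ C)) := by
    intro x hx y hy hxy
    by_contra hne
    simp only [Finset.coe_filter, Set.mem_ofPred_eq] at hx hy
    rcases hC (hf x hx.1 y hy.1 hne hxy) with h | h
    exacts [hx.2 h, hy.2 h]
  calc s.card = (s.filter (· ∈ C)).card + (s.filter (· ∉ C)).card :=
        (Finset.card_filter_add_card_filter_not _).symm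
    _ = (s.filter (· ∈ C)).card + ((s.filter (· ∉ C)).image f).card := by
        rw [Finset.card_image_of_injOn hinj]
    _ ≤ (s.filter (· ∈ C)).card + (s.image f).card := by
        gcongr
        exact Finset.filter_subset _ _

lemma T8_adj_of_ediv_two_eq {p q : ℤ × ℤ} (hne : p ≠ q) (h1 : p.1 / 2 = q.1 / 2)
    (h2 : p.2 / 2 = q.2 / 2) : T8.Adj p q := by
  refine (SimpleGraph.fromRel_adj _ p q).mpr ⟨hne, Or.inl ⟨?_, ?_⟩⟩ <;>
    rw [abs_le] <;> constructor <;> omega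

lemma box_eq_coe (w h : ℕ) :
    box w h = ↑(Finset.Ico (0 : ℤ) w ×ˢ Finset.Ico (0 : ℤ) h) := by
  simp [box]

lemma card_image_ediv_two_le (w h : ℕ) :
    ((Finset.Ico (0 : ℤ) w ×ˢ Finset.Ico (0 : ℤ) h).image fun p => (p.1 / 2, p.2 / 2)).card ≤
      (w + 1) / 2 * ((h + 1) / 2) := by
  calc _ ≤ (Finset.Ico (0 : ℤ) ((w + 1) / 2) ×ˢ Finset.Ico (0 : ℤ) ((h + 1) / 2)).card := by
        refine Finset.card_le_card fun q hq => ?_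
        simp only [Finset.mem_image, Finset.mem_product, Finset.mem_Ico] at hq ⊢
        obtain ⟨p, ⟨⟨hp1, hp1'⟩, hp2, hp2'⟩, rfl⟩ := hq
        omega
    _ = (w + 1) / 2 * ((h + 1) / 2) := by
        rw [Finset.card_product, Int.card_Ico, Int.card_Ico]
        congr 1

lemma IsVertexCover.card_box_le_ncard_add {w h : ℕ} {C : Set (ℤ × ℤ)} (hsub : C ⊆ box w h)
    (hC : IsVertexCover (finGrid T8 w h) C) :
    w * h ≤ C.ncard + (w + 1) / 2 * ((h + 1) / 2) := by
  classical
  set B := Finset.Ico (0 : ℤ) w ×ˢ Finset.Ico (0 : ℤ) h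
  have hbox : box w h = ↑B := box_eq_coe w h
  have hblocks := hC.card_le_card_filter_add_card_image B (fun p => (p.1 / 2, p.2 / 2))
    fun x hx y hy hne hxy => by
      simp only [Prod.mk.injEq] at hxy
      exact ⟨T8_adj_of_ediv_two_eq hne hxy.1 hxy.2, hbox ▸ hx, hbox ▸ hy⟩
  have hncard : C.ncard = (B.filter (· ∈ C)).card := by
    rw [← Set.ncard_coe_finset, Finset.coe_filter]
    congr 1
    ext p
    exact ⟨fun hp => ⟨Finset.mem_coe.mp (hbox ▸ hsub hp), hp⟩, And.right⟩
  have hcardB : B.card = w * h := by simp [B]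
  have hcard_blocks : (B.image fun p => (p.1 / 2, p.2 / 2)).card ≤ (w + 1) / 2 * ((h + 1) / 2) :=
    card_image_ediv_two_le w h
  omega

theorem stmt_14_general (h w : ℕ) (heven : Even h)
    (C : Set (ℤ × ℤ)) (hsub : C ⊆ box w h)
    (hcov : IsVertexCover (finGrid T8 w h) C) :
    3 * h * w - h ≤ 4 * C.ncard := by
  obtain ⟨m, rfl⟩ := heven
  have hbound := hcov.card_box_le_ncard_add hsub
  have hrows : (m + m + 1) / 2 = m := by omega
  have hcols : 2 * ((w + 1) / 2) ≤ w + 1 := Nat.mul_div_le _ _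
  rw [hrows] at hbound
  rw [Nat.sub_le_iff_le_add]
  nlinarith

/-- For even `h`, every vertex cover of the octagonal grid `T₈(h,w)` satisfies
`4|C| ≥ 3hw − h`. -/
theorem stmt_14 (h w : ℕ) (hh : 2 ≤ h) (heven : Even h) (hw : 2 ≤ w)
    (C : Set (ℤ × ℤ)) (hsub : C ⊆ box w h)
    (hcov : IsVertexCover (finGrid T8 w h) C) :
    3 * h * w - h ≤ 4 * C.ncard :=
  stmt_14_general h w heven C hsub hcov
end
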